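/- Let k ⊆ R and f(x) = x^n − a₁x^{n−1} + ⋯ + (−1)^n a_n ∈ k[x] of degree n ≥ 2 with Galois group S_n, whose roots r₁,…,r_n are real and satisfy r₁ < 0 < r₂ < ⋯ < r_n. Then K = k(√r₁,…,√r_n) satisfies [K:k] = 2^n·n!. -/

import Mathlib

/-!
Let `L = k(r₁, …, r_n) ⊆ ℝ` be the splitting field of `f`. Since `[L : k] = n!`, every permutation
of the roots is induced by an automorphism of `L`. Hence no product `∏_{i ∈ T} r_i` with `T ≠ ∅`
is a square in `L`: it is negative if `r₁` occurs in it, and otherwise the automorphism swapping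
`r₁` with some `r_j`, `j ∈ T`, maps it to a negative element. Adjoining the square roots one at a
time, this Kummer-type condition makes each step quadratic, so `[L(√r₁, …, √r_n) : L] = 2ⁿ`, and
the tower law gives `2ⁿ · n!`.
-/

open Polynomial IntermediateField Module Equiv

section Multiquadratic

variable {F E : Type*} [Field F] [Field E] [Algebra F E]

theorem exists_eq_add_mul_of_mem_adjoin_simple {K : IntermediateField F E} {w u : E}
    (hw : w ^ 2 ∈ K) (hu : u ∈ adjoin K {w}) : ∃ a ∈ K, ∃ b ∈ K, u = a + b * w := by
  set c : K := ⟨w ^ 2, hw⟩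
  have hq : (X ^ 2 - C c).Monic := monic_X_pow_sub_C c two_ne_zero
  have hroot : aeval w (X ^ 2 - C c) = 0 := by simp [c]
  rw [← mem_toSubalgebra, adjoin_simple_toSubalgebra_of_isAlgebraic ⟨_, hq.ne_zero, hroot⟩,
    Algebra.adjoin_singleton_eq_range_aeval] at hu
  obtain ⟨p, rfl⟩ := hu
  have hdeg : (p %ₘ (X ^ 2 - C c)).natDegree ≤ 1 := by
    have := natDegree_modByMonic_lt p hq fun h ↦ by simpa using congrArg natDegree h
    rw [natDegree_X_pow_sub_C] at this
    omega
  obtain ⟨b, a, hab⟩ := exists_eq_X_add_C_of_natDegree_le_one hdeg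
  refine ⟨a, a.2, b, b.2, ?_⟩
  change aeval w p = _
  rw [← aeval_modByMonic_eq_self_of_root hroot, hab]
  simp [add_comm]

theorem mem_or_mul_mem_of_mem_adjoin_simple (h2 : (2 : E) ≠ 0) {K : IntermediateField F E}
    {w u : E} (hw : w ^ 2 ∈ K) (hu : u ^ 2 ∈ K) (h : u ∈ adjoin K {w}) :
    u ∈ K ∨ u * w ∈ K := by
  obtain ⟨a, ha, b, hb, rfl⟩ := exists_eq_add_mul_of_mem_adjoin_simple hw h
  by_cases hwK : w ∈ K
  · exact .inl (add_mem ha (mul_mem hb hwK))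
  -- the cross term `2abw` of `(a + bw)²` lies in `K`, so `ab = 0`
  have hab : 2 * a * b = 0 := by
    by_contra hab
    have hcross : 2 * a * b * w ∈ K := by
      rw [show 2 * a * b * w = (a + b * w) ^ 2 - a ^ 2 - b ^ 2 * w ^ 2 by ring]
      exact sub_mem (sub_mem hu (pow_mem ha 2)) (mul_mem (pow_mem hb 2) hw)
    refine hwK ?_
    simpa [hab] using div_mem hcross (mul_mem (mul_mem (ofNat_mem K 2) ha) hb)
  rcases mul_eq_zero.1 hab with h' | rfl
  · obtain rfl : a = 0 := (mul_eq_zero.1 h').resolve_left h2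
    right
    rw [zero_add, mul_assoc, ← sq]
    exact mul_mem hb hw
  · left
    simpa using ha

theorem finrank_adjoin_simple_eq_two {K : IntermediateField F E} {w : E} (hw : w ^ 2 ∈ K)
    (hwK : w ∉ K) : finrank K (adjoin K {w}) = 2 := by
  set c : K := ⟨w ^ 2, hw⟩
  have hq : (X ^ 2 - C c).Monic := monic_X_pow_sub_C c two_ne_zero
  have hroot : aeval w (X ^ 2 - C c) = 0 := by simp [c]
  have hint : IsIntegral K w := ⟨_, hq, hroot⟩
  rw [adjoin.finrank hint]
  have hle : (minpoly K w).natDegree ≤ 2 := by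
    simpa using natDegree_le_of_dvd (minpoly.dvd K w hroot) hq.ne_zero
  have hne : (minpoly K w).natDegree ≠ 1 := by
    rw [Ne, minpoly.natDegree_eq_one_iff]
    simpa using hwK
  have := minpoly.natDegree_pos hint
  omega

variable {ι : Type*} {v : ι → E}

theorem exists_mul_prod_mem_bot_of_mem_adjoin [DecidableEq ι] (h2 : (2 : E) ≠ 0)
    (hsq : ∀ i, v i ^ 2 ∈ (⊥ : IntermediateField F E)) (t : Finset ι) {u : E}
    (hu : u ^ 2 ∈ (⊥ : IntermediateField F E)) (h : u ∈ adjoin F (v '' t)) :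
    ∃ S ⊆ t, u * ∏ i ∈ S, v i ∈ (⊥ : IntermediateField F E) := by
  induction t using Finset.induction_on generalizing u with
  | empty => exact ⟨∅, subset_rfl, by simpa using h⟩
  | insert a t ha ih =>
    rw [Finset.coe_insert, Set.image_insert_eq, ← Set.union_singleton, ← adjoin_adjoin_left] at h
    have hle := bot_le (a := adjoin F (v '' t))
    rcases mem_or_mul_mem_of_mem_adjoin_simple h2 (hle (hsq a)) (hle hu) h with h' | h'
    · obtain ⟨S, hS, hmem⟩ := ih hu h'
      exact ⟨S, hS.trans (Finset.subset_insert a t), hmem⟩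
    · obtain ⟨S, hS, hmem⟩ := ih (by rw [mul_pow]; exact mul_mem hu (hsq a)) h'
      refine ⟨insert a S, Finset.insert_subset_insert a hS, ?_⟩
      rwa [Finset.prod_insert fun haS ↦ ha (hS haS), ← mul_assoc]

theorem finrank_adjoin_image_eq_two_pow [DecidableEq ι] (h2 : (2 : E) ≠ 0)
    (hsq : ∀ i, v i ^ 2 ∈ (⊥ : IntermediateField F E))
    (hprod : ∀ T : Finset ι, T.Nonempty → ∏ i ∈ T, v i ∉ (⊥ : IntermediateField F E))
    (t : Finset ι) : finrank F (adjoin F (v '' t)) = 2 ^ t.card := by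
  induction t using Finset.induction_on with
  | empty => simp
  | insert a t ha ih =>
    have hnot : v a ∉ adjoin F (v '' t) := fun hmem ↦ by
      obtain ⟨S, hS, hmem⟩ := exists_mul_prod_mem_bot_of_mem_adjoin h2 hsq t (hsq a) hmem
      refine hprod (insert a S) (Finset.insert_nonempty a S) ?_
      rwa [Finset.prod_insert fun haS ↦ ha (hS haS)]
    rw [Finset.coe_insert, Set.image_insert_eq, ← Set.union_singleton, ← adjoin_adjoin_left,
      Finset.card_insert_of_notMem ha, pow_succ, ← ih,
      ← finrank_adjoin_simple_eq_two (bot_le (a := adjoin F (v '' t)) (hsq a)) hnot]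
    exact (finrank_mul_finrank F (adjoin F (v '' t)) (adjoin (adjoin F (v '' t)) {v a})).symm

theorem finrank_adjoin_range_eq_two_pow [Fintype ι] (h2 : (2 : E) ≠ 0)
    (hsq : ∀ i, v i ^ 2 ∈ (⊥ : IntermediateField F E))
    (hprod : ∀ T : Finset ι, T.Nonempty → ∏ i ∈ T, v i ∉ (⊥ : IntermediateField F E)) :
    finrank F (adjoin F (Set.range v)) = 2 ^ Fintype.card ι := by
  classical
  have := finrank_adjoin_image_eq_two_pow h2 hsq hprod Finset.univ
  rwa [Finset.coe_univ, Set.image_univ] at this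

theorem finrank_adjoin_eq_mul_of_le {K : IntermediateField F E} {S : Set E}
    (h : K ≤ adjoin F S) : finrank F (adjoin F S) = finrank F K * finrank K (adjoin K S) := by
  rw [← extendScalars_restrictScalars h, extendScalars_adjoin h]
  exact (finrank_mul_finrank F K (adjoin K S)).symm

end Multiquadratic

theorem rootSet_eq_range_of_map_eq_prod {k A ι : Type*} [Field k] [CommRing A] [IsDomain A]
    [Algebra k A] [Fintype ι] {f : k[X]} {x : ι → A}
    (hf : f.map (algebraMap k A) = ∏ i, (X - C (x i))) : f.rootSet A = Set.range x := by
  classical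
  ext y
  simp [rootSet_def, aroots_def, hf, roots_prod, Finset.prod_ne_zero_iff, X_sub_C_ne_zero]

theorem exists_algEquiv_apply_eq_of_finrank_eq_factorial {k L ι : Type*} [Field k] [Field L]
    [Algebra k L] [Fintype ι] {f : k[X]} [f.IsSplittingField k L] {x : ι → L}
    (hx : Function.Injective x) (hf : f.map (algebraMap k L) = ∏ i, (X - C (x i)))
    (hdeg : finrank k L = (Fintype.card ι).factorial) (π : Perm ι) :
    ∃ σ : L ≃ₐ[k] L, ∀ i, σ (x i) = x (π i) := by
  have : FiniteDimensional k L := IsSplittingField.finiteDimensional L f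
  have hsep : f.Separable := by
    rw [← separable_map (algebraMap k L), hf]
    exact separable_prod_X_sub_C_iff.2 hx
  have : IsGalois k L := IsGalois.of_separable_splitting_field hsep
  let e : ι ≃ f.rootSet L :=
    (Equiv.ofInjective x hx).trans (Equiv.setCongr (rootSet_eq_range_of_map_eq_prod hf).symm)
  have hfaithful : Function.Injective (MulAction.toPermHom (L ≃ₐ[k] L) (f.rootSet L)) :=
    fun σ τ hστ ↦ AlgEquiv.coe_toAlgHom_injective <|
      AlgHom.ext_of_adjoin_eq_top (IsSplittingField.adjoin_rootSet L f) fun y hy ↦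
        congrArg Subtype.val (DFunLike.congr_fun hστ (⟨y, hy⟩ : f.rootSet L))
  have hcard : Nat.card (Perm (f.rootSet L)) ≤ Nat.card (L ≃ₐ[k] L) := by
    rw [Nat.card_perm, IsGalois.card_aut_eq_finrank, hdeg, ← Nat.card_congr e,
      Nat.card_eq_fintype_card]
  obtain ⟨σ, hσ⟩ := (hfaithful.bijective_of_nat_card_le hcard).2 (e.permCongr π)
  refine ⟨σ, fun i ↦ ?_⟩
  simpa [e] using congrArg Subtype.val (DFunLike.congr_fun hσ (e i))

theorem sq_ne_prod_of_forall_perm {L ι : Type*} [Field L] [LinearOrder L] [IsStrictOrderedRing L]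
    [DecidableEq ι] {x : ι → L} {i₀ : ι} (hneg : x i₀ < 0) (hpos : ∀ i ≠ i₀, 0 < x i)
    (hperm : ∀ π : Perm ι, ∃ σ : L →+* L, ∀ i, σ (x i) = x (π i))
    {T : Finset ι} (hT : T.Nonempty) (c : L) : c ^ 2 ≠ ∏ i ∈ T, x i := by
  have prod_neg : ∀ {S : Finset ι}, i₀ ∈ S → ∏ i ∈ S, x i < 0 := fun hS ↦ by
    rw [← Finset.mul_prod_erase _ x hS]
    exact mul_neg_of_neg_of_pos hneg
      (Finset.prod_pos fun i hi ↦ hpos i (Finset.ne_of_mem_erase hi))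
  obtain ⟨j, hj⟩ := hT
  obtain ⟨σ, hσ⟩ := hperm (swap i₀ j)
  intro hc
  -- `σ` moves `x j` to `x i₀`, so it carries `c ^ 2` to a negative product
  have hσc : σ c ^ 2 = ∏ i ∈ T.map (swap i₀ j).toEmbedding, x i := by
    rw [← map_pow, hc, map_prod, Finset.prod_map]
    simp [hσ]
  refine (sq_nonneg (σ c)).not_gt (hσc ▸ prod_neg ?_)
  exact Finset.mem_map.2 ⟨j, hj, swap_apply_right i₀ j⟩

theorem sq_ne_prod_of_finrank_eq_factorial {k R ι : Type*} [Field k] [Field R] [LinearOrder R]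
    [IsStrictOrderedRing R] [Algebra k R] [Fintype ι] [DecidableEq ι] {f : k[X]} {x : ι → R}
    (hf : f.map (algebraMap k R) = ∏ i, (X - C (x i))) (hx : Function.Injective x) {i₀ : ι}
    (hneg : x i₀ < 0) (hpos : ∀ i ≠ i₀, 0 < x i)
    (hdeg : finrank k (adjoin k (Set.range x)) = (Fintype.card ι).factorial)
    {T : Finset ι} (hT : T.Nonempty) {y : R} (hy : y ∈ adjoin k (Set.range x)) :
    y ^ 2 ≠ ∏ i ∈ T, x i := by
  let L := adjoin k (Set.range x)
  have : f.IsSplittingField k L := by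
    have h := adjoin_rootSet_isSplittingField (hf ▸ Splits.prod fun i _ ↦ Splits.X_sub_C (x i))
    rwa [rootSet_eq_range_of_map_eq_prod hf] at h
  let ρ : ι → L := fun i ↦ ⟨x i, subset_adjoin k _ (Set.mem_range_self i)⟩
  have hρ : f.map (algebraMap k L) = ∏ i, (X - C (ρ i)) := by
    apply map_injective (algebraMap L R) Subtype.val_injective
    simpa [Polynomial.map_map, ← IsScalarTower.algebraMap_eq, Polynomial.map_prod, ρ] using hf
  have hperm (π : Perm ι) : ∃ σ : L →+* L, ∀ i, σ (ρ i) = ρ (π i) := by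
    obtain ⟨σ, hσ⟩ := exists_algEquiv_apply_eq_of_finrank_eq_factorial
      (fun i j h ↦ hx (congrArg Subtype.val h)) hρ hdeg π
    exact ⟨σ, hσ⟩
  intro h
  exact sq_ne_prod_of_forall_perm (x := ρ) hneg hpos hperm hT ⟨y, hy⟩ (Subtype.ext (by simpa [ρ]))

/-- Totally real variant: if `k ⊆ ℝ`, `f ∈ k[x]` is monic of degree `n ≥ 2`
with Galois group `S_n` (splitting field of degree `n!`), and its roots
`r₁,…,r_n` are real with `r₁ < 0 < r₂ < ⋯ < r_n`, then for chosen square roots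
`√r_i ∈ ℂ` the field `K = k(√r₁,…,√r_n)` has degree `2^n·n!` over `k`. -/
theorem stmt_7 {k : Type*} [Field k] [Algebra k ℝ] [Algebra k ℂ] [IsScalarTower k ℝ ℂ]
    {n : ℕ} (hn : 2 ≤ n)
    (f : k[X])
    (r : Fin n → ℝ)
    (hr : f.map (algebraMap k ℝ) = ∏ i : Fin n, (X - C (r i)))
    (hmono : StrictMono r)
    (hneg : r ⟨0, by omega⟩ < 0) (hpos : 0 < r ⟨1, by omega⟩)
    -- Galois group `S_n`: the splitting field inside `ℂ` has degree `n!` over `k`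
    (hgal : Module.finrank k
      (IntermediateField.adjoin k (Set.range fun i => ((r i : ℂ))) : IntermediateField k ℂ) =
        n.factorial)
    (s : Fin n → ℂ) (hs : ∀ i, s i ^ 2 = (r i : ℂ)) :
    Module.finrank k
      (IntermediateField.adjoin k (Set.range s) : IntermediateField k ℂ) =
      2 ^ n * n.factorial := by
  let i₀ : Fin n := ⟨0, by omega⟩
  let L : IntermediateField k ℝ := adjoin k (Set.range r)
  let Lc : IntermediateField k ℂ := L.map (IsScalarTower.toAlgHom k ℝ ℂ)
  have hLc : Lc = adjoin k (Set.range fun i ↦ (r i : ℂ)) := by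
    rw [show Lc = (adjoin k (Set.range r)).map _ from rfl, adjoin_map, ← Set.range_comp]; rfl
  have hLdeg : finrank k L = (Fintype.card (Fin n)).factorial := by
    rw [Fintype.card_fin, ← hgal, ← hLc]; exact (equivMap L _).toLinearEquiv.finrank_eq
  have hpos' : ∀ i ≠ i₀, 0 < r i := fun i hi ↦
    hpos.trans_le (hmono.monotone (Nat.one_le_iff_ne_zero.2 (Fin.val_ne_iff.2 hi)))
  have hsq : ∀ i, s i ^ 2 ∈ (⊥ : IntermediateField Lc ℂ) := fun i ↦
    mem_bot.2 ⟨⟨_, r i, subset_adjoin k _ (Set.mem_range_self i), (hs i).symm⟩, rfl⟩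
  have hprod :
      ∀ T : Finset (Fin n), T.Nonempty → ∏ i ∈ T, s i ∉ (⊥ : IntermediateField Lc ℂ) := by
    intro T hT hmem
    obtain ⟨⟨_, y, hyL, rfl⟩, hy⟩ := mem_bot.1 hmem
    refine sq_ne_prod_of_finrank_eq_factorial hr hmono.injective hneg hpos' hLdeg hT hyL
      (Complex.ofReal_injective ?_)
    have hy' : (y : ℂ) = ∏ i ∈ T, s i := hy
    simp [hy', ← Finset.prod_pow, hs]
  have hle : Lc ≤ adjoin k (Set.range s) := by
    rw [hLc, adjoin_le_iff, Set.range_subset_iff]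
    exact fun i ↦ hs i ▸ pow_mem (subset_adjoin k _ (Set.mem_range_self i)) 2
  rw [finrank_adjoin_eq_mul_of_le hle, finrank_adjoin_range_eq_two_pow two_ne_zero hsq hprod, hLc,
    hgal, Fintype.card_fin, mul_comm]
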